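/- arXiv:2306.08250 — 2 statements merged into one kernel-verified Lean document; each statement's English description precedes it below -/
import Mathlib

section
/- Let G be a group and g, h, x elements of G. If g h lies in <<x>>^+, then g^n h^n lies in <<x>>^+ for every positive integer n. -/
/-- The set of conjugates `h⁻¹ * g * h` of an element `g` of a group. -/
def conjSet {G : Type*} [Group G] (g : G) : Set G := {x | ∃ h : G, x = h⁻¹ * g * h}

/-- `<<g>>^+`: the subsemigroup generated by all conjugates of `g`, i.e. the set of
nonempty finite products of conjugates of `g`. -/
def ggP {G : Type*} [Group G] (g : G) : Subsemigroup G := Subsemigroup.closure (conjSet g)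

theorem conj_mem_ggP {G : Type*} [Group G] (x a c : G) (ha : a ∈ ggP x) :
    c⁻¹ * a * c ∈ ggP x := by
  induction ha using Subsemigroup.closure_induction with
  | mem y hy =>
    obtain ⟨k, rfl⟩ := hy
    exact Subsemigroup.subset_closure ⟨k * c, by group⟩
  | mul y z _ _ hy hz =>
    have : c⁻¹ * (y * z) * c = (c⁻¹ * y * c) * (c⁻¹ * z * c) := by group
    rw [this]; exact mul_mem hy hz

/-- if `g*h ∈ <<x>>^+`, then `g^n * h^n ∈ <<x>>^+` for every positive `n`. -/
theorem pow_mul_pow_mem_ggP {G : Type*} [Group G] (g h x : G)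
    (hgh : g * h ∈ ggP x) : ∀ n : ℕ, 0 < n → g ^ n * h ^ n ∈ ggP x := by
  intro n hn
  induction n with
  | zero => omega
  | succ m ih =>
    rcases Nat.eq_zero_or_pos m with hm | hm
    · subst hm; simpa using hgh
    · have key : g ^ (m + 1) * h ^ (m + 1)
          = ((g ^ m)⁻¹)⁻¹ * (g * h) * (g ^ m)⁻¹ * (g ^ m * h ^ m) := by
        group
      rw [key]
      exact mul_mem (conj_mem_ggP _ _ _ hgh) (ih hm)
end

section
/- Let p be a positive integer and q a nonzero integer. In the group G'_{p,q}, the identity element 1 lies in <<[x y, y x]>>^+, where x and y denote the images of the generators. -/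
/-- The relators of the presentation
`< x, y | ((yx)^q (xy)^{-q})^p y = x⁻¹ ((yx)^q (xy)^{-q})^p,
          ((yx)^{-q} (xy)^q)^p ((yx)^q (xy)^{-q})^p = 1 >`,
where `x` is the generator `0` and `y` is the generator `1`. -/
def gpqRels' (p q : ℤ) : Set (FreeGroup (Fin 2)) :=
  let x : FreeGroup (Fin 2) := FreeGroup.of 0
  let y : FreeGroup (Fin 2) := FreeGroup.of 1
  { ((y * x) ^ q * (x * y) ^ (-q)) ^ p * y *
      (x⁻¹ * ((y * x) ^ q * (x * y) ^ (-q)) ^ p)⁻¹,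
    ((y * x) ^ (-q) * (x * y) ^ q) ^ p * ((y * x) ^ q * (x * y) ^ (-q)) ^ p }

/-- `G'_{p,q}`, a presentation of the fundamental group of the 0-surgery along the
double twist knot `K_{p,q}`. -/
abbrev Gpq' (p q : ℤ) := PresentedGroup (gpqRels' p q)

/-!
Put `a = xy`, `b = yx`, `v = b^{-q} a^q` and `u = b^q a^{-q}`; the second relator says
`v^p u^p = 1`. Now `v u = [b^q, (a⁻¹)^q]`, and a commutator of positive (or of negative)
powers of `g` and `h` is a positive product of conjugates of `[g, h]`; as `[b, a⁻¹]` is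
conjugate to `[a, b]`, `v u` lies in `<<[a, b]>>^+`. Finally
`v^{n+1} u^{n+1} = v^n (v u) v^{-n} · v^n u^n`, so `v^p u^p = 1` lies there as well.
-/

section ggP

variable {G : Type*} [Group G]

theorem mem_ggP_self (g : G) : g ∈ ggP g :=
  Subsemigroup.subset_closure ⟨1, by group⟩

theorem conj_mem_ggP_s5 {g s : G} (hs : s ∈ ggP g) (k : G) : k⁻¹ * s * k ∈ ggP g := by
  induction hs using Subsemigroup.closure_induction with
  | mem s hs =>
    obtain ⟨h, rfl⟩ := hs
    exact Subsemigroup.subset_closure ⟨h * k, by group⟩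
  | mul s t _ _ hs ht =>
    have e : k⁻¹ * (s * t) * k = (k⁻¹ * s * k) * (k⁻¹ * t * k) := by group
    exact e ▸ mul_mem hs ht

theorem ggP_le_of_mem {g t : G} (ht : t ∈ ggP g) : ggP t ≤ ggP g :=
  Subsemigroup.closure_le.2 fun _ ⟨k, hk⟩ => hk ▸ conj_mem_ggP_s5 ht k

theorem ggP_le_of_eq_conj {g t : G} (k : G) (ht : t = k⁻¹ * g * k) : ggP t ≤ ggP g :=
  ggP_le_of_mem (ht ▸ conj_mem_ggP_s5 (mem_ggP_self g) k)

theorem pow_commutator_mem_ggP (g h : G) {n : ℕ} (hn : 0 < n) :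
    (g ^ n)⁻¹ * h⁻¹ * g ^ n * h ∈ ggP (g⁻¹ * h⁻¹ * g * h) := by
  induction n, hn using Nat.le_induction with
  | base => simpa using mem_ggP_self _
  | succ n _ ih =>
    have e : (g ^ (n + 1))⁻¹ * h⁻¹ * g ^ (n + 1) * h
        = g⁻¹ * ((g ^ n)⁻¹ * h⁻¹ * g ^ n * h) * g * (g⁻¹ * h⁻¹ * g * h) := by
      rw [pow_succ]; group
    exact e ▸ mul_mem (conj_mem_ggP_s5 ih g) (mem_ggP_self _)

-- `[g, h]` and `[h, g⁻¹]` are conjugate, which swaps the roles of the two entries.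
theorem commutator_pow_mem_ggP (g h : G) {n : ℕ} (hn : 0 < n) :
    g⁻¹ * (h ^ n)⁻¹ * g * h ^ n ∈ ggP (g⁻¹ * h⁻¹ * g * h) := by
  have hswap : ggP (h⁻¹ * g⁻¹⁻¹ * h * g⁻¹) ≤ ggP (g⁻¹ * h⁻¹ * g * h) :=
    ggP_le_of_eq_conj g⁻¹ (by group)
  have e : g⁻¹ * (h ^ n)⁻¹ * g * h ^ n
      = g⁻¹ * ((h ^ n)⁻¹ * g⁻¹⁻¹ * h ^ n * g⁻¹) * g := by
    group
  exact hswap (e ▸ conj_mem_ggP_s5 (pow_commutator_mem_ggP h g⁻¹ hn) g)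

theorem pow_commutator_pow_mem_ggP (g h : G) {m n : ℕ} (hm : 0 < m) (hn : 0 < n) :
    (g ^ m)⁻¹ * (h ^ n)⁻¹ * g ^ m * h ^ n ∈ ggP (g⁻¹ * h⁻¹ * g * h) :=
  ggP_le_of_mem (pow_commutator_mem_ggP g h hm) (commutator_pow_mem_ggP (g ^ m) h hn)

theorem zpow_commutator_zpow_mem_ggP (g h : G) {m n : ℤ} (hmn : 0 < m * n) :
    (g ^ m)⁻¹ * (h ^ n)⁻¹ * g ^ m * h ^ n ∈ ggP (g⁻¹ * h⁻¹ * g * h) := by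
  rcases pos_and_pos_or_neg_and_neg_of_mul_pos hmn with ⟨hm, hn⟩ | ⟨hm, hn⟩
  · lift m to ℕ using hm.le
    lift n to ℕ using hn.le
    simpa using pow_commutator_pow_mem_ggP g h (by omega) (by omega)
  · obtain ⟨m, rfl⟩ : ∃ m' : ℕ, m = -m' := ⟨m.natAbs, by omega⟩
    obtain ⟨n, rfl⟩ : ∃ n' : ℕ, n = -n' := ⟨n.natAbs, by omega⟩
    have hinv : ggP (g⁻¹⁻¹ * h⁻¹⁻¹ * g⁻¹ * h⁻¹) ≤ ggP (g⁻¹ * h⁻¹ * g * h) :=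
      ggP_le_of_eq_conj (g⁻¹ * h⁻¹) (by group)
    simpa using
      hinv (pow_commutator_pow_mem_ggP g⁻¹ h⁻¹ (m := m) (n := n) (by omega) (by omega))

theorem pow_mul_pow_mem_ggP_s5 {g u v : G} (h : v * u ∈ ggP g) {n : ℕ} (hn : 0 < n) :
    v ^ n * u ^ n ∈ ggP g := by
  induction n, hn using Nat.le_induction with
  | base => simpa using h
  | succ n _ ih =>
    have e : v ^ (n + 1) * u ^ (n + 1)
        = (v ^ n)⁻¹⁻¹ * (v * u) * (v ^ n)⁻¹ * (v ^ n * u ^ n) := by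
      rw [pow_succ, pow_succ']; group
    exact e ▸ mul_mem (conj_mem_ggP_s5 h _) ih

theorem one_mem_ggP_of_zpow_relation (a b : G) {p q : ℤ} (hp : 0 < p) (hq : q ≠ 0)
    (hrel : (b ^ (-q) * a ^ q) ^ p * (b ^ q * a ^ (-q)) ^ p = 1) :
    (1 : G) ∈ ggP (a⁻¹ * b⁻¹ * a * b) := by
  have hvu : b ^ (-q) * a ^ q * (b ^ q * a ^ (-q)) ∈ ggP (a⁻¹ * b⁻¹ * a * b) := by
    have hconj : ggP (b⁻¹ * a⁻¹⁻¹ * b * a⁻¹) ≤ ggP (a⁻¹ * b⁻¹ * a * b) :=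
      ggP_le_of_eq_conj a⁻¹ (by group)
    have hcomm := zpow_commutator_zpow_mem_ggP b a⁻¹ (mul_self_pos.2 hq)
    simpa [zpow_neg, mul_assoc] using hconj hcomm
  lift p to ℕ using hp.le
  simp only [zpow_natCast] at hrel
  exact hrel ▸ pow_mul_pow_mem_ggP_s5 hvu (by omega)

end ggP

/-- for `p` positive and `q` nonzero, `1 ∈ <<[xy, yx]>>^+` in `G'_{p,q}`. -/
theorem one_mem_ggP_commutator (p q : ℤ) (hp : 0 < p) (hq : q ≠ 0) :
    letI x : Gpq' p q := PresentedGroup.of 0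
    letI y : Gpq' p q := PresentedGroup.of 1
    (1 : Gpq' p q) ∈ ggP ((x * y)⁻¹ * (y * x)⁻¹ * (x * y) * (y * x)) := by
  have hrel := PresentedGroup.one_of_mem (rels := gpqRels' p q) (Set.mem_insert_of_mem _ rfl)
  simp only [map_mul, map_zpow] at hrel
  exact one_mem_ggP_of_zpow_relation _ _ hp hq hrel
end
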